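/- Let b : [γ₀, ∞) → (0, γ₀] be the unique function with λ'(b(a)) = λ'(a) for all a ≥ γ₀. Then there is a constant C ≥ 1 such that for all a ≥ γ₀: C⁻¹(a − γ₀)²/a ≤ a + b(a) − 2γ₀ ≤ C(a − γ₀)²/a, and C⁻¹(a − γ₀)²/√a ≤ −(λ''(b(a)) + λ''(a)) ≤ C(a − γ₀)²/√a. -/

import Mathlib

/-!
If `b < a` and `λ'(a) = λ'(b)`, squaring and dividing by `a - b` puts `s = a + b`, `p = ab` on
the curve `s² (9p - 1) = (1 - p) (3p - 1)²`. On it `(a - b)² (9p - 1) = -(3p + 1) (3p² + 6p - 1)`,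
so `1/9 < p ≤ γ₀²`, where `3γ₀⁴ + 6γ₀² - 1 = 0` makes γ₀ the inflection point of λ.

For the first estimate put `w = a + b - 2γ₀`. Since `γ₀² - p = (a - γ₀)² - a w` and
`s² - 4γ₀² = w (s + 2γ₀)`, the curve equation reads `w (K + a M) = (a - γ₀)² M` with `M ≥ 7` and
`0 ≤ K ≤ a M`, whence `a w ≤ (a - γ₀)² ≤ 2 a w`.

For the second, `(1 + 3b²) √(a + a³) = (1 + 3a²) √(b + b³)` turns `-(λ''(a) + λ''(b))` into a
symmetric polynomial `E(a, b)` (`deriv2SumNumerator`) over `4 (a + a³)^{3/2} (1 + 3b²)³`.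
On the curve `E (9p - 1)² (3p + 1) = (a - b)² Q(p)` (`Q = deriv2SumPoly`), and `Q` lies between 27 and 48 times
`(3p + 1) (1 - p)² (3p - 1)⁴ = (3p + 1) (9p - 1)² s⁴`. Hence `E ≍ (a - b)² s⁴ ≍ (a - γ₀)² a⁴`,
while `(a + a³)^{3/2} ≍ a⁴ √a` for `a ≥ γ₀`.
-/

noncomputable section

open Real Set

/-- The dispersion relation λ(x) = √(x + x³). -/
def lam (x : ℝ) : ℝ := Real.sqrt (x + x ^ 3)

/-- γ₀ = √((2√3 − 3)/3). -/
def gamma0 : ℝ := Real.sqrt ((2 * Real.sqrt 3 - 3) / 3)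

lemma hasDerivAt_lam {x : ℝ} (hx : 0 < x) :
    HasDerivAt lam ((1 + 3 * x ^ 2) / (2 * √(x + x ^ 3))) x := by
  have h := ((hasDerivAt_id' x).fun_add (hasDerivAt_pow 3 x)).sqrt (by positivity)
  norm_num at h
  exact h

lemma deriv_lam {x : ℝ} (hx : 0 < x) :
    deriv lam x = (1 + 3 * x ^ 2) / (2 * √(x + x ^ 3)) :=
  (hasDerivAt_lam hx).deriv

lemma deriv_deriv_lam {x : ℝ} (hx : 0 < x) :
    deriv (deriv lam) x = (3 * x ^ 4 + 6 * x ^ 2 - 1) / (4 * √(x + x ^ 3) ^ 3) := by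
  have hσ : 0 < √(x + x ^ 3) := by positivity
  have hσsq : √(x + x ^ 3) ^ 2 = x + x ^ 3 := sq_sqrt (by positivity)
  have hev : deriv lam =ᶠ[nhds x] fun y => (1 + 3 * y ^ 2) / (2 * √(y + y ^ 3)) := by
    filter_upwards [eventually_gt_nhds hx] with y hy using deriv_lam hy
  have hnum : HasDerivAt (fun y : ℝ => 1 + 3 * y ^ 2) (6 * x) x :=
    (((hasDerivAt_pow 2 x).const_mul 3).const_add 1).congr_deriv (by push_cast; ring)
  have hden : HasDerivAt (fun y => 2 * √(y + y ^ 3))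
      (2 * ((1 + 3 * x ^ 2) / (2 * √(x + x ^ 3)))) x := (hasDerivAt_lam hx).const_mul 2
  rw [hev.deriv_eq, (hnum.fun_div hden (by positivity)).deriv]
  generalize √(x + x ^ 3) = σ at hσ hσsq ⊢
  field_simp
  linear_combination 48 * x * hσsq

lemma gamma0_pos : 0 < gamma0 := by
  have h3 : √3 ^ 2 = 3 := sq_sqrt (by norm_num)
  exact sqrt_pos.2 (by nlinarith [sqrt_nonneg 3])

lemma gamma0_quartic : 3 * gamma0 ^ 4 + 6 * gamma0 ^ 2 - 1 = 0 := by
  have h3 : √3 ^ 2 = 3 := sq_sqrt (by norm_num)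
  have hγ : gamma0 ^ 2 = (2 * √3 - 3) / 3 := sq_sqrt (by nlinarith [sqrt_nonneg 3])
  linear_combination (3 * gamma0 ^ 2 + (2 * √3 - 3) + 6) * hγ + 4 / 3 * h3

lemma sqrt_add_cube_pow_three_bounds {a : ℝ} (ha : 0 ≤ a) (h : 1 ≤ 15 * a ^ 2) :
    a ^ 4 * √a ≤ √(a + a ^ 3) ^ 3 ∧ √(a + a ^ 3) ^ 3 ≤ 64 * (a ^ 4 * √a) := by
  have hcube : (a * √a) ^ 3 = a ^ 4 * √a := by
    rw [mul_pow, pow_succ √a 2, sq_sqrt ha]; ring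
  have hlo : a * √a ≤ √(a + a ^ 3) := by
    rw [← sqrt_sq (by positivity : 0 ≤ a * √a), mul_pow, sq_sqrt ha]
    exact sqrt_le_sqrt (by nlinarith)
  have hhi : √(a + a ^ 3) ≤ 4 * (a * √a) := by
    rw [← sqrt_sq (by positivity : 0 ≤ 4 * (a * √a)), mul_pow, mul_pow, sq_sqrt ha]
    exact sqrt_le_sqrt (by nlinarith)
  constructor
  · rw [← hcube]; exact pow_le_pow_left₀ (by positivity) hlo 3
  · calc √(a + a ^ 3) ^ 3 ≤ (4 * (a * √a)) ^ 3 := pow_le_pow_left₀ (sqrt_nonneg _) hhi 3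
      _ = 64 * (a ^ 4 * √a) := by rw [mul_pow, hcube]; norm_num

def deriv2SumPoly (p : ℝ) : ℝ :=
  4 + 60 * p - 396 * p ^ 2 - 756 * p ^ 3 + 6156 * p ^ 4 - 972 * p ^ 5 - 26244 * p ^ 6
    + 26244 * p ^ 7

lemma deriv2SumPoly_bounds {p : ℝ} (hp : 1 / 9 ≤ p) (hq : 3 * p ^ 2 + 6 * p - 1 ≤ 0) :
    27 * ((3 * p + 1) * (1 - p) ^ 2 * (3 * p - 1) ^ 4) ≤ deriv2SumPoly p ∧
      deriv2SumPoly p ≤ 48 * ((3 * p + 1) * (1 - p) ^ 2 * (3 * p - 1) ^ 4) := by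
  have hp0 : 0 ≤ p := by linarith
  have hp6 : p ≤ 1 / 6 := by nlinarith
  -- with `Q = deriv2SumPoly p` and `T` the product in the statement,
  -- `Q - 27 T = (9p - 1) A` and `48 T - Q = -(3p² + 6p - 1) B` for the polynomials `A`, `B` below
  have hA : 0 ≤ 23 - 150 * p + 45 * p ^ 2 + 1404 * p ^ 3 - 2511 * p ^ 4 - 486 * p ^ 5
      + 2187 * p ^ 6 := by
    nlinarith [mul_nonneg hp0 (sub_nonneg.2 hp6), pow_nonneg hp0 3, pow_nonneg hp0 4,
      pow_nonneg hp0 5, pow_nonneg hp0 6]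
  have hB : 0 ≤ 44 - 324 * p + 360 * p ^ 2 + 2376 * p ^ 3 - 6804 * p ^ 4 + 4860 * p ^ 5 := by
    nlinarith [mul_nonneg hp0 (sub_nonneg.2 hp6), pow_nonneg hp0 3, pow_nonneg hp0 4,
      pow_nonneg hp0 5]
  unfold deriv2SumPoly
  constructor
  · linarith [mul_nonneg (by linarith : (0 : ℝ) ≤ 9 * p - 1) hA]
  · linarith [mul_nonneg (by linarith : (0 : ℝ) ≤ -(3 * p ^ 2 + 6 * p - 1)) hB]

def deriv2SumNumerator (a b : ℝ) : ℝ :=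
  -((3 * a ^ 4 + 6 * a ^ 2 - 1) * (1 + 3 * b ^ 2) ^ 3
    + (3 * b ^ 4 + 6 * b ^ 2 - 1) * (1 + 3 * a ^ 2) ^ 3)

section ConjugatePair

variable {a b : ℝ}

lemma mul_sqrt_eq_of_deriv_lam_eq (ha : 0 < a) (hb : 0 < b) (h : deriv lam b = deriv lam a) :
    (1 + 3 * b ^ 2) * √(a + a ^ 3) = (1 + 3 * a ^ 2) * √(b + b ^ 3) := by
  rw [deriv_lam hb, deriv_lam ha, div_eq_div_iff (by positivity) (by positivity)] at h
  linarith

lemma neg_deriv2_add_mul_eq (ha : 0 < a) (hb : 0 < b) (h : deriv lam b = deriv lam a) :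
    -(deriv (deriv lam) b + deriv (deriv lam) a) * (4 * √(a + a ^ 3) ^ 3 * (1 + 3 * b ^ 2) ^ 3)
      = deriv2SumNumerator a b := by
  have hcube : ((1 + 3 * b ^ 2) * √(a + a ^ 3)) ^ 3 = ((1 + 3 * a ^ 2) * √(b + b ^ 3)) ^ 3 := by
    rw [mul_sqrt_eq_of_deriv_lam_eq ha hb h]
  have hσa : 0 < √(a + a ^ 3) := by positivity
  have hσb : 0 < √(b + b ^ 3) := by positivity
  rw [deriv_deriv_lam ha, deriv_deriv_lam hb]
  unfold deriv2SumNumerator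
  generalize √(a + a ^ 3) = σa at hcube hσa ⊢
  generalize √(b + b ^ 3) = σb at hcube hσb ⊢
  field_simp
  linear_combination -(3 * b ^ 4 + 6 * b ^ 2 - 1) * hcube

lemma pair_equation_of_deriv_lam_eq (hb : 0 < b) (hbγ : b ≤ gamma0) (haγ : gamma0 ≤ a)
    (h : deriv lam b = deriv lam a) :
    (a + b) ^ 2 * (9 * (a * b) - 1) = (1 - a * b) * (3 * (a * b) - 1) ^ 2 := by
  have ha : 0 < a := hb.trans_le (hbγ.trans haγ)
  rcases (hbγ.trans haγ).eq_or_lt with rfl | hba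
  · obtain rfl : b = gamma0 := le_antisymm hbγ haγ
    linear_combination (3 * gamma0 ^ 2 + 1) * gamma0_quartic
  · have hsq : (1 + 3 * b ^ 2) ^ 2 * (a + a ^ 3) = (1 + 3 * a ^ 2) ^ 2 * (b + b ^ 3) := by
      have h2 := congrArg (· ^ 2) (mul_sqrt_eq_of_deriv_lam_eq ha hb h)
      simp only [mul_pow, sq_sqrt (by positivity : (0 : ℝ) ≤ a + a ^ 3),
        sq_sqrt (by positivity : (0 : ℝ) ≤ b + b ^ 3)] at h2
      exact h2
    have hfac : (a - b) * ((a + b) ^ 2 * (9 * (a * b) - 1) - (1 - a * b) * (3 * (a * b) - 1) ^ 2)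
        = 0 := by
      linear_combination -hsq
    linarith [(mul_eq_zero.1 hfac).resolve_left (sub_ne_zero.2 hba.ne')]

lemma one_ninth_lt_mul_of_pair_equation
    (h : (a + b) ^ 2 * (9 * (a * b) - 1) = (1 - a * b) * (3 * (a * b) - 1) ^ 2) :
    1 / 9 < a * b := by
  by_contra! hp
  nlinarith [mul_nonpos_of_nonneg_of_nonpos (sq_nonneg (a + b)) (by linarith : 9 * (a * b) - 1 ≤ 0),
    mul_pos (by linarith : (0 : ℝ) < 1 - a * b) (by nlinarith : (0 : ℝ) < (3 * (a * b) - 1) ^ 2)]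

lemma sub_sq_mul_of_pair_equation
    (h : (a + b) ^ 2 * (9 * (a * b) - 1) = (1 - a * b) * (3 * (a * b) - 1) ^ 2) :
    (a - b) ^ 2 * (9 * (a * b) - 1) = -(3 * (a * b) + 1) * (3 * (a * b) ^ 2 + 6 * (a * b) - 1) := by
  linear_combination h

lemma quadratic_nonpos_of_pair_equation
    (h : (a + b) ^ 2 * (9 * (a * b) - 1) = (1 - a * b) * (3 * (a * b) - 1) ^ 2) :
    3 * (a * b) ^ 2 + 6 * (a * b) - 1 ≤ 0 := by
  have hp := one_ninth_lt_mul_of_pair_equation h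
  nlinarith [sub_sq_mul_of_pair_equation h,
    mul_nonneg (sq_nonneg (a - b)) (by linarith : (0 : ℝ) ≤ 9 * (a * b) - 1)]

lemma deriv2SumNumerator_mul_eq
    (h : (a + b) ^ 2 * (9 * (a * b) - 1) = (1 - a * b) * (3 * (a * b) - 1) ^ 2) :
    deriv2SumNumerator a b * (9 * (a * b) - 1) ^ 3
      = -(3 * (a * b) ^ 2 + 6 * (a * b) - 1) * deriv2SumPoly (a * b) := by
  unfold deriv2SumNumerator deriv2SumPoly
  linear_combination
    (27 * (9 * (a * b) - 1) ^ 2 * (a + b) ^ 4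
      - (3 + 162 * (a * b) - 2592 * (a * b) ^ 2 + 6318 * (a * b) ^ 3 + 15309 * (a * b) ^ 4)
        * (a + b) ^ 2
      + (6 + 18 * (a * b) - 144 * (a * b) ^ 2 - 756 * (a * b) ^ 3 - 10530 * (a * b) ^ 4
        + 36450 * (a * b) ^ 5 + 8748 * (a * b) ^ 6)) * h

lemma deriv2SumNumerator_bounds
    (h : (a + b) ^ 2 * (9 * (a * b) - 1) = (1 - a * b) * (3 * (a * b) - 1) ^ 2) :
    27 * ((a - b) ^ 2 * (a + b) ^ 4) ≤ deriv2SumNumerator a b ∧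
      deriv2SumNumerator a b ≤ 48 * ((a - b) ^ 2 * (a + b) ^ 4) := by
  have hp := one_ninth_lt_mul_of_pair_equation h
  obtain ⟨hlo, hhi⟩ := deriv2SumPoly_bounds hp.le (quadratic_nonpos_of_pair_equation h)
  have hE := deriv2SumNumerator_mul_eq h
  have hd := sub_sq_mul_of_pair_equation h
  set p := a * b
  have hK : 0 < (9 * p - 1) ^ 3 * (3 * p + 1) := by
    have : 0 < 9 * p - 1 := by linarith
    positivity
  have hc : 0 ≤ (a - b) ^ 2 * (9 * p - 1) := mul_nonneg (sq_nonneg _) (by linarith)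
  have hEK : deriv2SumNumerator a b * ((9 * p - 1) ^ 3 * (3 * p + 1))
      = (a - b) ^ 2 * (9 * p - 1) * deriv2SumPoly p := by
    linear_combination (3 * p + 1) * hE - deriv2SumPoly p * hd
  have hTK : (a - b) ^ 2 * (a + b) ^ 4 * ((9 * p - 1) ^ 3 * (3 * p + 1))
      = (a - b) ^ 2 * (9 * p - 1) * ((3 * p + 1) * (1 - p) ^ 2 * (3 * p - 1) ^ 4) := by
    linear_combination (a - b) ^ 2 * (9 * p - 1) * (3 * p + 1)
      * ((a + b) ^ 2 * (9 * p - 1) + (1 - p) * (3 * p - 1) ^ 2) * h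
  constructor
  · refine le_of_mul_le_mul_right ?_ hK
    rw [mul_assoc, hTK, hEK]
    linarith [mul_le_mul_of_nonneg_left hlo hc]
  · refine le_of_mul_le_mul_right ?_ hK
    rw [mul_assoc 48, hTK, hEK]
    linarith [mul_le_mul_of_nonneg_left hhi hc]

lemma add_sub_two_gamma0_bounds (hbγ : b ≤ gamma0) (haγ : gamma0 ≤ a)
    (h : (a + b) ^ 2 * (9 * (a * b) - 1) = (1 - a * b) * (3 * (a * b) - 1) ^ 2) :
    0 ≤ a + b - 2 * gamma0 ∧ a * (a + b - 2 * gamma0) ≤ (a - gamma0) ^ 2 ∧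
      (a - gamma0) ^ 2 ≤ 2 * a * (a + b - 2 * gamma0) := by
  have hγ := gamma0_pos
  have ha : 0 < a := hγ.trans_le haγ
  have hp := one_ninth_lt_mul_of_pair_equation h
  have hq := quadratic_nonpos_of_pair_equation h
  have hb : 0 < b := pos_of_mul_pos_right (by linarith) ha.le
  set γ := gamma0
  set p := a * b
  set M := 9 * p ^ 2 + (9 * γ ^ 2 - 15) * p + 10 + 3 * γ ^ 2
  set K := (a + b + 2 * γ) * (9 * p - 1)
  have hM : 7 ≤ M := by nlinarith [mul_nonneg (sq_nonneg γ) (by linarith : (0 : ℝ) ≤ p)]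
  have hK : 0 ≤ K := mul_nonneg (by linarith) (by linarith)
  have hKM : K ≤ a * M := by
    have : K ≤ 4 * a * (1 / 2) :=
      mul_le_mul (by linarith) (by nlinarith) (by linarith) (by linarith)
    nlinarith
  have key : (a + b - 2 * γ) * (K + a * M) = (a - γ) ^ 2 * M := by
    linear_combination h - (3 * p + 1) * gamma0_quartic
  have hw : 0 ≤ a + b - 2 * γ :=
    nonneg_of_mul_nonneg_left (key ▸ mul_nonneg (sq_nonneg _) (by linarith)) (by positivity)
  refine ⟨hw, ?_, ?_⟩
  · nlinarith [mul_nonneg hw hK]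
  · nlinarith [mul_le_mul_of_nonneg_left hKM hw]

lemma neg_deriv2_add_bounds (hb : 0 < b) (hba : b ≤ a) (hder : deriv lam b = deriv lam a)
    (h : (a + b) ^ 2 * (9 * (a * b) - 1) = (1 - a * b) * (3 * (a * b) - 1) ^ 2) :
    (a - b) ^ 2 ≤ 40 * (√a * -(deriv (deriv lam) b + deriv (deriv lam) a)) ∧
      √a * -(deriv (deriv lam) b + deriv (deriv lam) a) ≤ 192 * (a - b) ^ 2 := by
  have ha : 0 < a := hb.trans_le hba
  have hp := one_ninth_lt_mul_of_pair_equation h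
  have hq := quadratic_nonpos_of_pair_equation h
  obtain ⟨hElo, hEhi⟩ := deriv2SumNumerator_bounds h
  obtain ⟨hσlo, hσhi⟩ := sqrt_add_cube_pow_three_bounds ha.le (by nlinarith)
  have hX := neg_deriv2_add_mul_eq ha hb hder
  set X := -(deriv (deriv lam) b + deriv (deriv lam) a)
  set σ3 := √(a + a ^ 3) ^ 3
  set G := (1 + 3 * b ^ 2) ^ 3
  have hG1 : 1 ≤ G := one_le_pow₀ (by nlinarith)
  have hG4 : G ≤ 4 := by
    have : 1 + 3 * b ^ 2 ≤ 3 / 2 := by nlinarith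
    calc G ≤ (3 / 2) ^ 3 := pow_le_pow_left₀ (by positivity) this 3
      _ ≤ 4 := by norm_num
  have hs4lo : a ^ 4 ≤ (a + b) ^ 4 := pow_le_pow_left₀ ha.le (by linarith) 4
  have hs4hi : (a + b) ^ 4 ≤ 16 * a ^ 4 := by
    calc (a + b) ^ 4 ≤ (2 * a) ^ 4 := pow_le_pow_left₀ (by linarith) (by linarith) 4
      _ = 16 * a ^ 4 := by ring
  have hr := sqrt_pos.2 ha
  have hD : 0 < 4 * σ3 * G := by positivity
  constructor
  · refine le_of_mul_le_mul_right ?_ hD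
    calc (a - b) ^ 2 * (4 * σ3 * G) ≤ (a - b) ^ 2 * (4 * (64 * (a ^ 4 * √a)) * 4) := by gcongr
      _ ≤ 40 * (√a * (27 * ((a - b) ^ 2 * (a + b) ^ 4))) := by
        nlinarith [mul_le_mul_of_nonneg_left hs4lo (mul_nonneg (sq_nonneg (a - b)) hr.le)]
      _ ≤ 40 * (√a * deriv2SumNumerator a b) := by gcongr
      _ = 40 * (√a * X) * (4 * σ3 * G) := by rw [← hX]; ring
  · refine le_of_mul_le_mul_right ?_ hD
    calc √a * X * (4 * σ3 * G) = √a * deriv2SumNumerator a b := by rw [← hX]; ring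
      _ ≤ √a * (48 * ((a - b) ^ 2 * (a + b) ^ 4)) := by gcongr
      _ ≤ 192 * (a - b) ^ 2 * (4 * (a ^ 4 * √a) * 1) := by
        nlinarith [mul_le_mul_of_nonneg_left hs4hi (mul_nonneg (sq_nonneg (a - b)) hr.le)]
      _ ≤ 192 * (a - b) ^ 2 * (4 * σ3 * G) := by gcongr

end ConjugatePair

/-- There is C ≥ 1 such that for all a ≥ γ₀:
C⁻¹(a − γ₀)²/a ≤ a + b(a) − 2γ₀ ≤ C(a − γ₀)²/a and
C⁻¹(a − γ₀)²/√a ≤ −(λ''(b(a)) + λ''(a)) ≤ C(a − γ₀)²/√a. -/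
theorem stmt6 (b : ℝ → ℝ)
    (hb : ∀ a : ℝ, gamma0 ≤ a → b a ∈ Ioc 0 gamma0 ∧ deriv lam (b a) = deriv lam a) :
    ∃ C : ℝ, 1 ≤ C ∧ ∀ a : ℝ, gamma0 ≤ a →
      (C⁻¹ * (a - gamma0) ^ 2 / a ≤ a + b a - 2 * gamma0 ∧
        a + b a - 2 * gamma0 ≤ C * (a - gamma0) ^ 2 / a) ∧
      (C⁻¹ * (a - gamma0) ^ 2 / Real.sqrt a ≤
          -(deriv (deriv lam) (b a) + deriv (deriv lam) a) ∧
        -(deriv (deriv lam) (b a) + deriv (deriv lam) a) ≤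
          C * (a - gamma0) ^ 2 / Real.sqrt a) := by
  refine ⟨768, by norm_num, fun a ha => ?_⟩
  obtain ⟨⟨hb0, hbγ⟩, hder⟩ := hb a ha
  have hpair := pair_equation_of_deriv_lam_eq hb0 hbγ ha hder
  obtain ⟨hw, hw_lo, hw_hi⟩ := add_sub_two_gamma0_bounds hbγ ha hpair
  obtain ⟨hX_lo, hX_hi⟩ := neg_deriv2_add_bounds hb0 (hbγ.trans ha) hder hpair
  have ha0 : 0 < a := gamma0_pos.trans_le ha
  have hab_lo : (a - gamma0) ^ 2 ≤ (a - b a) ^ 2 := by nlinarith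
  have hab_hi : (a - b a) ^ 2 ≤ 4 * (a - gamma0) ^ 2 := by nlinarith
  refine ⟨⟨?_, ?_⟩, ?_, ?_⟩
  · rw [div_le_iff₀ ha0]; linarith
  · rw [le_div_iff₀ ha0]; nlinarith
  · rw [div_le_iff₀ (sqrt_pos.2 ha0)]; linarith
  · rw [le_div_iff₀ (sqrt_pos.2 ha0)]; linarith
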